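/- arXiv:2401.03170 — 2 statements merged into one kernel-verified Lean document; each statement's English description precedes it below -/
import Mathlib

section
/- In the Gaussian DG model with η = 1/2, common variance σ², and γ > 1, the map w_s ↦ g(w_s) := (‖μ_d‖₂² + γ·w_s²‖μ_s‖₂²)/√(‖μ_d‖₂² + w_s²‖μ_s‖₂²) is monotonically nondecreasing on [0,1]; consequently the test-domain risk R(1, w_s) = F(-g(w_s)/σ) is nonincreasing in w_s, so the featurizer fully preserving the silent feature (w_s = 1) minimizes the test risk among {Φ_{(1,w_s)} : w_s ∈ [0,1]}. -/
/-!
Writing `x = A + t`, one has `(A + γ t) / √x = γ √x - (γ - 1) A / √x`, a sum of two nondecreasing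
functions of `x ≥ A` when `A ≥ 0` and `γ ≥ 1`. Substituting `A = ‖μ_d‖²`, `t = w_s² ‖μ_s‖²` gives
the monotonicity of `g`, and the risk `F(-g/σ)` is then nonincreasing because `F` is monotone.
-/

open MeasureTheory ProbabilityTheory

/-- The CDF of the standard normal distribution `N(0,1)`. -/
noncomputable def stdNormalCDF (t : ℝ) : ℝ :=
  ((gaussianReal 0 1) (Set.Iic t)).toReal

open Set Real

lemma add_mul_div_sqrt_eq (A γ t : ℝ) :
    (A + γ * t) / √(A + t) = γ * √(A + t) - (γ - 1) * (A / √(A + t)) := by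
  nth_rw 2 [← div_sqrt]
  ring

lemma antitoneOn_div_sqrt {A : ℝ} (hA : 0 ≤ A) : AntitoneOn (fun x => A / √x) (Ici A) := by
  intro x hx y _ hxy
  rcases hA.eq_or_lt with rfl | hA
  · simp
  · exact div_le_div_of_nonneg_left hA.le (sqrt_pos.2 (hA.trans_le hx)) (sqrt_le_sqrt hxy)

lemma monotoneOn_add_mul_div_sqrt {A γ : ℝ} (hA : 0 ≤ A) (hγ : 1 ≤ γ) :
    MonotoneOn (fun t => (A + γ * t) / √(A + t)) (Ici 0) := by
  intro s hs t ht hst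
  simp only [add_mul_div_sqrt_eq]
  gcongr ?_ - (γ - 1) * ?_
  · exact mul_le_mul_of_nonneg_left (sqrt_le_sqrt (by linarith)) (by linarith)
  · exact antitoneOn_div_sqrt hA (mem_Ici.2 (le_add_of_nonneg_right hs))
      (mem_Ici.2 (le_add_of_nonneg_right ht)) (by linarith)

lemma monotone_stdNormalCDF : Monotone stdNormalCDF := fun x y hxy => by
  simpa only [stdNormalCDF, cdf_eq_real, measureReal_def] using (cdf (gaussianReal 0 1)).mono hxy

lemma antitone_stdNormalCDF_neg_div {σ : ℝ} (hσ : 0 ≤ σ) :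
    Antitone fun x => stdNormalCDF (-x / σ) :=
  monotone_stdNormalCDF.comp_antitone fun _ _ h => div_le_div_of_nonneg_right (neg_le_neg h) hσ

theorem test_risk_antitone_of_gamma_gt_one_general
    (pd ps : ℕ) (μd : EuclideanSpace ℝ (Fin pd)) (μs : EuclideanSpace ℝ (Fin ps))
    (σ γ : ℝ) (hσ : 0 < σ) (hγ : 1 < γ) :
    MonotoneOn (fun ws : ℝ => (‖μd‖ ^ 2 + γ * ws ^ 2 * ‖μs‖ ^ 2)
        / Real.sqrt (‖μd‖ ^ 2 + ws ^ 2 * ‖μs‖ ^ 2)) (Set.Icc 0 1)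
      ∧ AntitoneOn (fun ws : ℝ => stdNormalCDF (-((‖μd‖ ^ 2 + γ * ws ^ 2 * ‖μs‖ ^ 2)
          / Real.sqrt (‖μd‖ ^ 2 + ws ^ 2 * ‖μs‖ ^ 2)) / σ)) (Set.Icc 0 1)
      ∧ ∀ ws ∈ Set.Icc (0 : ℝ) 1,
          stdNormalCDF (-((‖μd‖ ^ 2 + γ * 1 ^ 2 * ‖μs‖ ^ 2)
              / Real.sqrt (‖μd‖ ^ 2 + 1 ^ 2 * ‖μs‖ ^ 2)) / σ)
            ≤ stdNormalCDF (-((‖μd‖ ^ 2 + γ * ws ^ 2 * ‖μs‖ ^ 2)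
              / Real.sqrt (‖μd‖ ^ 2 + ws ^ 2 * ‖μs‖ ^ 2)) / σ) := by
  have hsq : MonotoneOn (fun ws : ℝ => ws ^ 2 * ‖μs‖ ^ 2) (Icc 0 1) := fun a ha _ _ hab => by
    dsimp only
    gcongr
    exact ha.1
  have hg := (monotoneOn_add_mul_div_sqrt (sq_nonneg ‖μd‖) hγ.le).comp hsq
    fun ws _ => mem_Ici.2 (by positivity)
  simp only [Function.comp_def, ← mul_assoc] at hg
  have hrisk := (antitone_stdNormalCDF_neg_div hσ.le).comp_monotoneOn hg
  exact ⟨hg, hrisk, fun ws hws => hrisk hws (right_mem_Icc.2 zero_le_one) hws.2⟩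

/-- For `γ > 1`, the map `w_s ↦ g(w_s) = (‖μ_d‖² + γ w_s²‖μ_s‖²)/√(‖μ_d‖² + w_s²‖μ_s‖²)`
is nondecreasing on `[0,1]`; hence the test risk `R(1, w_s) = F(-g(w_s)/σ)` is nonincreasing
in `w_s`, and `w_s = 1` minimizes the test risk among `{Φ_{(1,w_s)} : w_s ∈ [0,1]}`. -/
theorem test_risk_antitone_of_gamma_gt_one
    (pd ps : ℕ) (μd : EuclideanSpace ℝ (Fin pd)) (μs : EuclideanSpace ℝ (Fin ps))
    (σ γ : ℝ) (hσ : 0 < σ) (hμd : μd ≠ 0) (hγ : 1 < γ) :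
    MonotoneOn (fun ws : ℝ => (‖μd‖ ^ 2 + γ * ws ^ 2 * ‖μs‖ ^ 2)
        / Real.sqrt (‖μd‖ ^ 2 + ws ^ 2 * ‖μs‖ ^ 2)) (Set.Icc 0 1)
      ∧ AntitoneOn (fun ws : ℝ => stdNormalCDF (-((‖μd‖ ^ 2 + γ * ws ^ 2 * ‖μs‖ ^ 2)
          / Real.sqrt (‖μd‖ ^ 2 + ws ^ 2 * ‖μs‖ ^ 2)) / σ)) (Set.Icc 0 1)
      ∧ ∀ ws ∈ Set.Icc (0 : ℝ) 1,
          stdNormalCDF (-((‖μd‖ ^ 2 + γ * 1 ^ 2 * ‖μs‖ ^ 2)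
              / Real.sqrt (‖μd‖ ^ 2 + 1 ^ 2 * ‖μs‖ ^ 2)) / σ)
            ≤ stdNormalCDF (-((‖μd‖ ^ 2 + γ * ws ^ 2 * ‖μs‖ ^ 2)
              / Real.sqrt (‖μd‖ ^ 2 + ws ^ 2 * ‖μs‖ ^ 2)) / σ) :=
  test_risk_antitone_of_gamma_gt_one_general pd ps μd μs σ γ hσ hγ
end

section
/- In the symmetric Gaussian model, for any fixed w_s ∈ (0,1] and γ ∈ (0,1), R_test(1,w_s) ≤ R_test(1,0) if and only if (‖μ_d‖₂² + γ w_s²‖μ_s‖₂²)² ≥ ‖μ_d‖₂²·(‖μ_d‖₂² + w_s²‖μ_s‖₂²), which (with a := w_s²‖μ_s‖₂² > 0) is equivalent to γ²a + 2γ‖μ_d‖₂² ≥ ‖μ_d‖₂². -/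
open MeasureTheory ProbabilityTheory

lemma stdNormalCDF_strictMono : StrictMono stdNormalCDF := by
  intro s t hst
  unfold stdNormalCDF
  have hsplit : Set.Iic t = Set.Iic s ∪ Set.Ioc s t := (Set.Iic_union_Ioc_eq_Iic hst.le).symm
  have hdisj : Disjoint (Set.Iic s) (Set.Ioc s t) := by
    simp [Set.disjoint_left]
    intro x hx hx'
    exact absurd hx (not_le.mpr hx')
  have hmeas : (gaussianReal 0 1) (Set.Iic t)
      = (gaussianReal 0 1) (Set.Iic s) + (gaussianReal 0 1) (Set.Ioc s t) := by
    rw [hsplit, measure_union hdisj measurableSet_Ioc]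
  have hpos : 0 < (gaussianReal 0 1) (Set.Ioc s t) := by
    rw [pos_iff_ne_zero]
    intro h0
    have := gaussianReal_absolutelyContinuous' (0 : ℝ) (v := 1) one_ne_zero h0
    rw [Real.volume_Ioc] at this
    simp only [ENNReal.ofReal_eq_zero, sub_nonpos] at this
    exact absurd this (not_le.mpr hst)
  have hfin : (gaussianReal 0 1) (Set.Iic t) < ⊤ := measure_lt_top _ _
  have hfin' : (gaussianReal 0 1) (Set.Iic s) < ⊤ := measure_lt_top _ _
  rw [ENNReal.toReal_lt_toReal hfin'.ne hfin.ne, hmeas]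
  exact ENNReal.lt_add_right hfin'.ne hpos.ne'

/-- For `γ ∈ (0,1)` and `w_s ∈ (0,1]` with `μ_s ≠ 0`, setting `a = w_s²‖μ_s‖² > 0`:
`R_test(1,w_s) ≤ R_test(1,0)` if and only if
`(‖μ_d‖² + γa)² ≥ ‖μ_d‖²(‖μ_d‖² + a)`, which is equivalent to
`γ²a + 2γ‖μ_d‖² ≥ ‖μ_d‖²`. -/
theorem small_gamma_threshold
    (pd ps : ℕ) (μd : EuclideanSpace ℝ (Fin pd)) (μs : EuclideanSpace ℝ (Fin ps))
    (σ γ ws : ℝ) (hσ : 0 < σ) (hμd : μd ≠ 0) (hμs : μs ≠ 0)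
    (hγ : γ ∈ Set.Ioo (0 : ℝ) 1) (hws : ws ∈ Set.Ioc (0 : ℝ) 1) :
    (stdNormalCDF (-(1 / σ) * ((‖μd‖ ^ 2 + γ * (ws ^ 2 * ‖μs‖ ^ 2))
          / Real.sqrt (‖μd‖ ^ 2 + ws ^ 2 * ‖μs‖ ^ 2)))
        ≤ stdNormalCDF (-‖μd‖ / σ)
      ↔ (‖μd‖ ^ 2 + γ * (ws ^ 2 * ‖μs‖ ^ 2)) ^ 2
          ≥ ‖μd‖ ^ 2 * (‖μd‖ ^ 2 + ws ^ 2 * ‖μs‖ ^ 2))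
    ∧ ((‖μd‖ ^ 2 + γ * (ws ^ 2 * ‖μs‖ ^ 2)) ^ 2
          ≥ ‖μd‖ ^ 2 * (‖μd‖ ^ 2 + ws ^ 2 * ‖μs‖ ^ 2)
      ↔ γ ^ 2 * (ws ^ 2 * ‖μs‖ ^ 2) + 2 * γ * ‖μd‖ ^ 2 ≥ ‖μd‖ ^ 2) := by
  have hm : 0 < ‖μd‖ := norm_pos_iff.mpr hμd
  have hms : 0 < ‖μs‖ := norm_pos_iff.mpr hμs
  obtain ⟨hγ0, hγ1⟩ := hγ
  obtain ⟨hws0, hws1⟩ := hws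
  set m : ℝ := ‖μd‖ with hmdef
  set a : ℝ := ws ^ 2 * ‖μs‖ ^ 2 with hadef
  have ha : 0 < a := by positivity
  set s : ℝ := Real.sqrt (m ^ 2 + a) with hsdef
  have hs : 0 < s := Real.sqrt_pos.mpr (by positivity)
  have hs2 : s ^ 2 = m ^ 2 + a := Real.sq_sqrt (by positivity)
  constructor
  · rw [stdNormalCDF_strictMono.le_iff_le]
    have h1 : (-(1 / σ) * ((m ^ 2 + γ * a) / s) ≤ -m / σ) ↔ m * s ≤ m ^ 2 + γ * a := by
      rw [show -(1 / σ) * ((m ^ 2 + γ * a) / s) = -(((m ^ 2 + γ * a) / s) / σ) by ring,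
        neg_div, neg_le_neg_iff, div_le_div_iff_of_pos_right hσ, le_div_iff₀ hs]
    rw [h1, ge_iff_le]
    constructor
    · intro h
      nlinarith [mul_pos hm hs]
    · intro h
      have hsq : (m * s) ^ 2 ≤ (m ^ 2 + γ * a) ^ 2 := by nlinarith
      exact le_of_pow_le_pow_left₀ two_ne_zero (by positivity) hsq
  · rw [ge_iff_le, ge_iff_le]
    constructor
    · intro h
      nlinarith
    · intro h
      nlinarith
end
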